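/- Let R = ⟨A, S, R, D, γ⟩ be an RDP whose dynamics are represented by a finite transducer T = ⟨Q, q₀, S, τ, θ⟩, let p ∈ (0,1), and let A = ⟨Q, Σ, τ', λ, ⊥, q₀⟩ be the PDFA associated to R and stop probability p. Then for every history h ∈ S*, every trace t ∈ Σ*, and every string h' ∈ Σ* whose projection onto observation states equals h, it holds that D_{π_p}(t | h) = λ(τ'(q₀, h'), t), where D_{π_p} denotes the dynamics of R under the exploration policy with stop probability p. -/
import Mathlib


/-- Extension of a deterministic transition function to strings. -/
def tauStar {Q S : Type*} (τ : Q → S → Q) : Q → List S → Q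
  | q, [] => q
  | q, s :: h => tauStar τ (τ q s) h

/-- Probability of a trace under the exploration policy with stop probability `p`, given
the history so far: `D_{π_p}(ε|h) = 1` and
`D_{π_p}((a,s,r)·t | h) = ((1−p)/|A|)·D(s,r|h,a)·D_{π_p}(t|hs)`. -/
noncomputable def dPip {A S R : Type*} [Fintype A]
    (D : List S → A → S → R → ℝ) (p : ℝ) : List S → List (A × S × R) → ℝ
  | _, [] => 1
  | h, σ :: t =>
      ((1 - p) / (Fintype.card A : ℝ)) * D h σ.1 σ.2.1 σ.2.2 * dPip D p (h ++ [σ.2.1]) t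

/-- Extension of a PDFA probability function to strings (prefix probability). -/
noncomputable def lamStar {Q Sym : Type*} (tau' : Q → Sym → Q) (lam : Q → Sym → ℝ) :
    Q → List Sym → ℝ
  | _, [] => 1
  | q, σ :: x => lam q σ * lamStar tau' lam (tau' q σ) x

lemma tauStar_append {Q S : Type*} (τ : Q → S → Q) (q : Q) (l : List S) (s : S) :
    tauStar τ q (l ++ [s]) = τ (tauStar τ q l) s := by
  induction l generalizing q with
  | nil => rfl
  | cons a l ih => simpa [tauStar] using ih (τ q a)

/-- For an RDP with dynamics transducer `⟨Q, q₀, S, τ, θ⟩` and the PDFA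
associated to it and stop probability `p`, for every history `h`, trace `t`, and string
`h'` over the alphabet whose projection onto observation states is `h`, it holds that
`D_{π_p}(t | h) = λ(τ'(q₀, h'), t)`. -/
theorem rdp_dynamics_captured_by_pdfa
    {A S Q R : Type*} [Fintype A] [Nonempty A] [Fintype S] [Fintype Q] [Fintype R]
    -- stop probability
    (p : ℝ) (hp0 : 0 < p) (hp1 : p < 1)
    -- dynamics function of the RDP, represented by the transducer ⟨Q, q₀, S, τ, θ⟩
    (D : List S → A → S → R → ℝ)
    (hD0 : ∀ h a s r, 0 ≤ D h a s r)
    (hD1 : ∀ h a, (∑ s : S, ∑ r : R, D h a s r) = 1)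
    (q₀ : Q) (τ : Q → S → Q) (θ : Q → A → S → R → ℝ)
    (hrep : ∀ h a s r, D h a s r = θ (tauStar τ q₀ h) a s r)
    -- the associated PDFA on symbols (a,s,r): transitions τ'(q,(a,s,r)) = τ(q,s) and
    -- probabilities λ(q,(a,s,r)) = ((1−p)/|A|)·θ(q)(a,s,r)
    (tau' : Q → A × S × R → Q)
    (htau' : ∀ q σ, tau' q σ = τ q σ.2.1)
    (lam : Q → A × S × R → ℝ)
    (hlam : ∀ q σ, lam q σ = ((1 - p) / (Fintype.card A : ℝ)) * θ q σ.1 σ.2.1 σ.2.2) :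
    ∀ (h : List S) (t : List (A × S × R)) (h' : List (A × S × R)),
      (∀ σ ∈ h', ∃ hh : List S, 0 < D hh σ.1 σ.2.1 σ.2.2) →
      h'.map (fun σ => σ.2.1) = h →
      dPip D p h t = lamStar tau' lam (tauStar tau' q₀ h') t := by
  have proj : ∀ (q : Q) (h' : List (A × S × R)),
      tauStar tau' q h' = tauStar τ q (h'.map (fun σ => σ.2.1)) := by
    intro q h'
    induction h' generalizing q with
    | nil => rfl
    | cons σ l ih => simp [tauStar, htau', ih]
  have main : ∀ (t : List (A × S × R)) (h : List S),
      dPip D p h t = lamStar tau' lam (tauStar τ q₀ h) t := by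
    intro t
    induction t with
    | nil => intro h; rfl
    | cons σ t ih =>
      intro h
      simp only [dPip, lamStar, ih]
      rw [hlam, ← hrep, htau', tauStar_append]
  intro h t h' _ hproj
  rw [main t h, proj, hproj]
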